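/- arXiv:2003.04623 — 3 statements merged into one kernel-verified Lean document; each statement's English description precedes it below -/
import Mathlib

section
/- If Γ ≺_S Δ, then the label S contains no formula of the form ◇A and no formula of the form ¬(A ▷ B). -/
inductive ILForm : Type
  | bot : ILForm
  | var : ℕ → ILForm
  | imp : ILForm → ILForm → ILForm
  | box : ILForm → ILForm
  | rhd : ILForm → ILForm → ILForm
  deriving DecidableEq

namespace ILForm

def neg (A : ILForm) : ILForm := A.imp ILForm.bot
def or (A B : ILForm) : ILForm := A.neg.imp B
def and (A B : ILForm) : ILForm := (A.imp B.neg).neg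
def dia (A : ILForm) : ILForm := A.neg.box.neg

end ILForm

/-- A Boolean valuation: respects `⊥` and `→`, arbitrary on variables, boxes and `▷`. -/
def IsBoolVal (v : ILForm → Bool) : Prop :=
  v ILForm.bot = false ∧ ∀ A B : ILForm, v (A.imp B) = (!(v A) || v B)

/-- Classical tautologies in the modal language. -/
def ILTaut (A : ILForm) : Prop := ∀ v, IsBoolVal v → v A = true

/-- Provability in the interpretability logic IL. -/
inductive ILProv : ILForm → Prop
  | taut {A : ILForm} : ILTaut A → ILProv A
  | K {A B : ILForm} : ILProv (((A.imp B).box).imp ((A.box).imp (B.box)))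
  | L {A : ILForm} : ILProv ((((A.box).imp A).box).imp (A.box))
  | J1 {A B : ILForm} : ILProv (((A.imp B).box).imp (A.rhd B))
  | J2 {A B C : ILForm} : ILProv (((A.rhd B).and (B.rhd C)).imp (A.rhd C))
  | J3 {A B C : ILForm} : ILProv (((A.rhd C).and (B.rhd C)).imp ((A.or B).rhd C))
  | J4 {A B : ILForm} : ILProv ((A.rhd B).imp ((A.dia).imp (B.dia)))
  | J5 {A : ILForm} : ILProv ((A.dia).rhd A)
  | mp {A B : ILForm} : ILProv (A.imp B) → ILProv A → ILProv B
  | nec {A : ILForm} : ILProv A → ILProv (A.box)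

/-- An extension of IL: contains all IL theorems, closed under modus ponens and necessitation. -/
structure ILExtension (P : ILForm → Prop) : Prop where
  il : ∀ {A}, ILProv A → P A
  mp : ∀ {A B}, P (A.imp B) → P A → P B
  nec : ∀ {A}, P A → P (A.box)

/-- Derivability from a set of assumptions in the logic `P`. -/
inductive Deriv (P : ILForm → Prop) (S : Set ILForm) : ILForm → Prop
  | thm {A : ILForm} : P A → Deriv P S A
  | mem {A : ILForm} : A ∈ S → Deriv P S A
  | mp {A B : ILForm} : Deriv P S (A.imp B) → Deriv P S A → Deriv P S B

def ILConsistent (P : ILForm → Prop) (S : Set ILForm) : Prop := ¬ Deriv P S ILForm.bot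

/-- Maximal consistent set w.r.t. the logic `P`. -/
def ILMCS (P : ILForm → Prop) (S : Set ILForm) : Prop :=
  ILConsistent P S ∧ ∀ T : Set ILForm, S ⊂ T → ¬ ILConsistent P T

/-- Finite disjunction; the empty disjunction is `⊥`. -/
def bigOr : List ILForm → ILForm
  | [] => ILForm.bot
  | A :: l => A.or (bigOr l)

/-- `Assuring Γ Δ S` ("Γ ≺_S Δ"): Δ is an S-assuring successor of Γ. -/
def Assuring (Γ Δ : Set ILForm) (S : Set ILForm) : Prop :=
  ∀ (A : ILForm) (L : List ILForm), (∀ B ∈ L, B ∈ S) →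
    (A.neg.rhd (bigOr (L.map ILForm.neg))) ∈ Γ → A ∈ Δ ∧ A.box ∈ Δ

/-- `Succ Γ Δ` ("Γ ≺ Δ"): whenever □A ∈ Γ, both A and □A are in Δ. -/
def Succ (Γ Δ : Set ILForm) : Prop :=
  ∀ A : ILForm, A.box ∈ Γ → A ∈ Δ ∧ A.box ∈ Δ

section Aux

open ILForm

/-- Derivations from `insert A S` reduce to derivations from `S` when `A` is derivable. -/
lemma deriv_insert {P : ILForm → Prop} {S : Set ILForm} {A C : ILForm}
    (hA : Deriv P S A) (h : Deriv P (insert A S) C) : Deriv P S C := by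
  induction h with
  | thm h => exact Deriv.thm h
  | mem h =>
    rcases h with rfl | h
    · exact hA
    · exact Deriv.mem h
  | mp _ _ ih1 ih2 => exact Deriv.mp ih1 ih2

/-- An MCS contains everything it derives. -/
lemma mem_of_deriv {P : ILForm → Prop} {Γ : Set ILForm} (hΓ : ILMCS P Γ) {A : ILForm}
    (h : Deriv P Γ A) : A ∈ Γ := by
  by_contra hA
  exact hΓ.2 (insert A Γ) ⟨Set.subset_insert _ _, fun hsub => hA (hsub (Set.mem_insert _ _))⟩
    (fun hbot => hΓ.1 (deriv_insert h hbot))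

lemma prov_trans {P : ILForm → Prop} (hP : ILExtension P) {A B C : ILForm}
    (h1 : P (A.imp B)) (h2 : P (B.imp C)) : P (A.imp C) := by
  have htaut : P (((A.imp B)).imp (((B.imp C)).imp (A.imp C))) := by
    apply hP.il; apply ILProv.taut
    intro v ⟨hb, hi⟩
    simp only [hi]
    cases v A <;> cases v B <;> cases v C <;> rfl
  exact hP.mp (hP.mp htaut h1) h2

/-- `⊢ □⊥ → □¬A`. -/
lemma prov_box_bot_imp {P : ILForm → Prop} (hP : ILExtension P) (A : ILForm) :
    P ((ILForm.bot.box).imp (A.neg.box)) := by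
  have h1 : P (ILForm.bot.imp A.neg) := by
    apply hP.il; apply ILProv.taut
    intro v ⟨hb, hi⟩
    simp only [ILForm.neg, hi, hb]
    rfl
  exact hP.mp (hP.il ILProv.K) (hP.nec h1)

/-- From `⊢ C → D` get `⊢ C ▷ D`. -/
lemma prov_rhd_of_imp {P : ILForm → Prop} (hP : ILExtension P) {C D : ILForm}
    (h : P (C.imp D)) : P (C.rhd D) :=
  hP.mp (hP.il ILProv.J1) (hP.nec h)

/-- Key derivation 1: `⊢ ¬¬□⊥ → (¬◇A ∨ ⊥)`. -/
lemma prov_key1 {P : ILForm → Prop} (hP : ILExtension P) (A : ILForm) :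
    P (((ILForm.bot.box.neg).neg).imp ((A.dia.neg).or ILForm.bot)) := by
  have h1 : P ((ILForm.bot.box).imp (A.neg.box)) := prov_box_bot_imp hP A
  have htaut : P (((ILForm.bot.box).imp (A.neg.box)).imp
      ((((ILForm.bot.box.neg).neg)).imp ((A.dia.neg).or ILForm.bot))) := by
    apply hP.il; apply ILProv.taut
    intro v ⟨hb, hi⟩
    simp only [ILForm.neg, ILForm.or, ILForm.dia, hi, hb]
    cases v ILForm.bot.box <;> cases v ((A.imp ILForm.bot).box) <;> rfl
  exact hP.mp htaut h1

/-- Key derivation 2: `⊢ ¬◇A → (¬¬(A ▷ B) ∨ ⊥)`. -/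
lemma prov_key2 {P : ILForm → Prop} (hP : ILExtension P) (A B : ILForm) :
    P ((A.dia.neg).imp (((A.rhd B).neg.neg).or ILForm.bot)) := by
  -- ⊢ ¬A → (A → B)
  have h0 : P (A.neg.imp (A.imp B)) := by
    apply hP.il; apply ILProv.taut
    intro v ⟨hb, hi⟩
    simp only [ILForm.neg, hi, hb]
    cases v A <;> cases v B <;> rfl
  -- ⊢ □¬A → □(A → B)
  have h1 : P ((A.neg.box).imp ((A.imp B).box)) := hP.mp (hP.il ILProv.K) (hP.nec h0)
  -- ⊢ □(A→B) → A ▷ B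
  have h2 : P (((A.imp B).box).imp (A.rhd B)) := hP.il ILProv.J1
  have h3 : P ((A.neg.box).imp (A.rhd B)) := prov_trans hP h1 h2
  have htaut : P (((A.neg.box).imp (A.rhd B)).imp
      ((A.dia.neg).imp (((A.rhd B).neg.neg).or ILForm.bot))) := by
    apply hP.il; apply ILProv.taut
    intro v ⟨hb, hi⟩
    simp only [ILForm.neg, ILForm.or, ILForm.dia, hi, hb]
    cases v ((A.imp ILForm.bot).box) <;> cases v (A.rhd B) <;> rfl
  exact hP.mp htaut h3

/-- Key derivation 3: `⊢ □◇A → □⊥`. -/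
lemma prov_key3 {P : ILForm → Prop} (hP : ILExtension P) (A : ILForm) :
    P ((A.dia.box).imp (ILForm.bot.box)) := by
  have h1 : P ((ILForm.bot.box).imp (A.neg.box)) := prov_box_bot_imp hP A
  -- ⊢ ◇A → ¬□⊥
  have h2 : P ((A.dia).imp (ILForm.bot.box.neg)) := by
    have htaut : P (((ILForm.bot.box).imp (A.neg.box)).imp
        ((A.dia).imp (ILForm.bot.box.neg))) := by
      apply hP.il; apply ILProv.taut
      intro v ⟨hb, hi⟩
      simp only [ILForm.neg, ILForm.dia, hi, hb]
      cases v ILForm.bot.box <;> cases v ((A.imp ILForm.bot).box) <;> rfl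
    exact hP.mp htaut h1
  -- ⊢ □◇A → □¬□⊥
  have h3 : P ((A.dia.box).imp ((ILForm.bot.box.neg).box)) :=
    hP.mp (hP.il ILProv.K) (hP.nec h2)
  -- L axiom with A := ⊥ : ⊢ □(□⊥ → ⊥) → □⊥, note ¬□⊥ = □⊥ → ⊥ definitionally
  have h4 : P (((ILForm.bot.box.neg).box).imp (ILForm.bot.box)) := hP.il ILProv.L
  exact prov_trans hP h3 h4

end Aux

/-- If Γ ≺_S Δ, then S contains no ◇-formula and no negated ▷-formula. -/
theorem assuring_label_no_dia_no_negrhd (P : ILForm → Prop) (hP : ILExtension P)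
    (Γ Δ : Set ILForm) (hΓ : ILMCS P Γ) (hΔ : ILMCS P Δ)
    (S : Set ILForm) (h : Assuring Γ Δ S) :
    (∀ A : ILForm, A.dia ∉ S) ∧ (∀ A B : ILForm, (A.rhd B).neg ∉ S) := by
  constructor
  · intro A hA
    -- apply Assuring with X = ¬□⊥, L = [◇A]
    have hrhd : ((ILForm.bot.box.neg).neg.rhd (bigOr ([A.dia].map ILForm.neg))) ∈ Γ := by
      apply mem_of_deriv hΓ
      apply Deriv.thm
      exact prov_rhd_of_imp hP (prov_key1 hP A)
    obtain ⟨h1, h2⟩ := h (ILForm.bot.box.neg) [A.dia] (by simpa using hA) hrhd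
    -- Δ contains ¬□⊥ and □¬□⊥; L gives □⊥, contradiction
    apply hΔ.1
    have d1 : Deriv P Δ (ILForm.bot.box.neg) := Deriv.mem h1
    have d2 : Deriv P Δ ((ILForm.bot.box.neg).box) := Deriv.mem h2
    have d3 : Deriv P Δ (ILForm.bot.box) :=
      Deriv.mp (Deriv.thm (hP.il ILProv.L)) d2
    exact Deriv.mp d1 d3
  · intro A B hAB
    -- apply Assuring with X = ◇A, L = [¬(A ▷ B)]
    have hrhd : ((A.dia).neg.rhd (bigOr ([(A.rhd B).neg].map ILForm.neg))) ∈ Γ := by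
      apply mem_of_deriv hΓ
      apply Deriv.thm
      exact prov_rhd_of_imp hP (prov_key2 hP A B)
    obtain ⟨h1, h2⟩ := h (A.dia) [(A.rhd B).neg] (by simpa using hAB) hrhd
    -- Δ contains ◇A and □◇A; key3 gives □⊥, then □¬A, then ⊥
    apply hΔ.1
    have d1 : Deriv P Δ (A.dia) := Deriv.mem h1
    have d2 : Deriv P Δ ((A.dia).box) := Deriv.mem h2
    have d3 : Deriv P Δ (ILForm.bot.box) :=
      Deriv.mp (Deriv.thm (prov_key3 hP A)) d2
    have d4 : Deriv P Δ (A.neg.box) :=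
      Deriv.mp (Deriv.thm (prov_box_bot_imp hP A)) d3
    exact Deriv.mp d1 d4
end

section
/- If Γ ≺_S Δ ≺_T Λ for Γ-full label S and Δ-full label T, then S ⊆ T. -/
/-- S is a Γ-full label (w.r.t. the logic P). -/
def FullLabel (P : ILForm → Prop) (Γ S : Set ILForm) : Prop :=
  (∀ (A : ILForm) (L : List ILForm), (∀ B ∈ L, B ∈ S) →
      (A.neg.rhd (bigOr (L.map ILForm.neg))) ∈ Γ → A ∈ S ∧ A.box ∈ S) ∧
  (∀ φ : ILForm, Deriv P S φ → φ ∈ S) ∧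
  (∀ B ∈ S, ILForm.box B ∈ S)

lemma deriv_insert_s13 {P : ILForm → Prop} {Δ : Set ILForm} {φ ψ : ILForm}
    (h : Deriv P (insert φ Δ) ψ) (hφ : Deriv P Δ φ) : Deriv P Δ ψ := by
  induction h with
  | thm h => exact .thm h
  | mem h =>
    rcases h with h | h
    · exact h ▸ hφ
    · exact .mem h
  | mp _ _ ih1 ih2 => exact .mp ih1 ih2

lemma mcs_closed {P : ILForm → Prop} {Δ : Set ILForm} (hΔ : ILMCS P Δ)
    {φ : ILForm} (h : Deriv P Δ φ) : φ ∈ Δ := by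
  by_contra hφ
  have hsub : Δ ⊂ insert φ Δ := Set.ssubset_insert hφ
  have := hΔ.2 _ hsub
  simp only [ILConsistent, not_not] at this
  exact hΔ.1 (deriv_insert_s13 this h)

/-- If Γ ≺_S Δ ≺_T Λ with S Γ-full and T Δ-full, then S ⊆ T. -/
theorem full_labels_accrue (P : ILForm → Prop) (hP : ILExtension P)
    (Γ Δ Λ : Set ILForm) (hΓ : ILMCS P Γ) (hΔ : ILMCS P Δ) (hΛ : ILMCS P Λ)
    (S T : Set ILForm) (hS : FullLabel P Γ S) (hT : FullLabel P Δ T)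
    (h1 : Assuring Γ Δ S) (h2 : Assuring Δ Λ T) :
    S ⊆ T := by
  intro B hB
  -- Step 1: from A ▷ A a theorem, get B, □B ∈ Δ via h1 with L = [B].
  have taut2 : ILTaut (B.neg.imp (B.neg.or ILForm.bot)) := by
    intro v hv
    rcases hv with ⟨h0, h1⟩
    simp only [ILForm.neg, ILForm.or, h1, h0]
    cases v B <;> simp
  have hprov : P (B.neg.rhd (bigOr ([B].map ILForm.neg))) := by
    have : bigOr ([B].map ILForm.neg) = B.neg.or ILForm.bot := rfl
    rw [this]
    exact hP.il (ILProv.mp ILProv.J1 (ILProv.nec (ILProv.taut taut2)))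
  have hmemΓ : (B.neg.rhd (bigOr ([B].map ILForm.neg))) ∈ Γ :=
    mcs_closed hΓ (.thm hprov)
  have hBΔ := h1 B [B] (by simpa using hB) hmemΓ
  -- Step 2: from □B ∈ Δ derive ¬B ▷ ⊥ ∈ Δ, then use fullness of T with L = [].
  have taut1 : ILTaut (B.imp (B.neg.imp ILForm.bot)) := by
    intro v hv
    rcases hv with ⟨h0, h1⟩
    simp only [ILForm.neg, h1, h0]
    cases v B <;> simp
  have d1 : Deriv P Δ ((B.neg.imp ILForm.bot).box) :=
    .mp (.thm (hP.il (ILProv.mp ILProv.K (ILProv.nec (ILProv.taut taut1)))))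
      (.mem hBΔ.2)
  have d2 : Deriv P Δ (B.neg.rhd (bigOr (List.map ILForm.neg []))) :=
    .mp (.thm (hP.il ILProv.J1)) d1
  exact (hT.1 B [] (by simp) (mcs_closed hΔ d2)).1
end

section
/- Let Γ be an ILX-MCS, B a formula, and S a set of formulas such that for every finite S' ⊆ S, ¬(B ▷ ⋁_{S_i∈S'}¬S_i) ∈ Γ. Then there exists an ILX-MCS Δ with Γ ≺_S Δ, B ∈ Δ, and □¬B ∈ Δ. -/
/-!
Call `A` assured when `¬A ▷ ⋁_{C ∈ S'} ¬C ∈ Γ` for some finite `S' ⊆ S`, and let `Δ` be a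
maximal consistent extension of `{B, □¬B} ∪ {A, □A | A assured}`. Assured formulas are closed
under conjunction, so were this set inconsistent, a single assured `A` would satisfy
`⊢ B ∧ □¬B ∧ A ∧ □A → ⊥`, i.e. `⊢ B ∧ □¬B → ¬A ∨ ◇¬A`. As `B ▷ B ∧ □¬B` (Löb) and
`◇¬A ▷ ¬A` (J5), this gives `⊢ B ▷ ¬A`; with `¬A ▷ ⋁_{C ∈ S'} ¬C ∈ Γ` it puts
`B ▷ ⋁_{C ∈ S'} ¬C` into `Γ`, against the hypothesis.
-/

namespace IsBoolVal

variable {v : ILForm → Bool}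

theorem bot (hv : IsBoolVal v) : v ILForm.bot = false := hv.1

theorem imp (hv : IsBoolVal v) (A B : ILForm) : v (A.imp B) = (!v A || v B) := hv.2 A B

theorem neg (hv : IsBoolVal v) (A : ILForm) : v A.neg = !v A := by
  rw [ILForm.neg, hv.imp, hv.bot, Bool.or_false]

theorem or (hv : IsBoolVal v) (A B : ILForm) : v (A.or B) = (v A || v B) := by
  rw [ILForm.or, hv.imp, hv.neg, Bool.not_not]

theorem and (hv : IsBoolVal v) (A B : ILForm) : v (A.and B) = (v A && v B) := by
  rw [ILForm.and, hv.neg, hv.imp, hv.neg, Bool.not_or, Bool.not_not, Bool.not_not]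

theorem dia (hv : IsBoolVal v) (A : ILForm) : v A.dia = !v A.neg.box := hv.neg _

theorem bigOr (hv : IsBoolVal v) (l : List ILForm) : v (bigOr l) = l.any v := by
  induction l with
  | nil => exact hv.bot
  | cons A l ih => rw [_root_.bigOr, hv.or, ih, List.any_cons]

end IsBoolVal

structure ILTheory (T : ILForm → Prop) : Prop where
  il : ∀ {A}, ILProv A → T A
  mp : ∀ {A B}, T (A.imp B) → T A → T B

theorem ILExtension.toILTheory {P : ILForm → Prop} (hP : ILExtension P) : ILTheory P :=
  ⟨hP.il, hP.mp⟩

namespace ILTheory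

variable {T : ILForm → Prop}

theorem of_taut (hT : ILTheory T) {A : ILForm} (h : ILTaut A) : T A := hT.il (.taut h)

theorem mp_of_taut (hT : ILTheory T) {A B : ILForm} (t : ILTaut (A.imp B)) (hA : T A) : T B :=
  hT.mp (hT.of_taut t) hA

theorem mp₂_of_taut (hT : ILTheory T) {A B C : ILForm} (t : ILTaut (A.imp (B.imp C)))
    (hA : T A) (hB : T B) : T C :=
  hT.mp (hT.mp_of_taut t hA) hB

theorem imp_trans (hT : ILTheory T) {A B C : ILForm} (h₁ : T (A.imp B)) (h₂ : T (B.imp C)) :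
    T (A.imp C) :=
  hT.mp₂_of_taut (fun v hv => by grind [hv.imp]) h₁ h₂

theorem and_intro (hT : ILTheory T) {A B : ILForm} (hA : T A) (hB : T B) : T (A.and B) :=
  hT.mp₂_of_taut (fun v hv => by grind [hv.imp, hv.and]) hA hB

theorem rhd_trans (hT : ILTheory T) {A B C : ILForm} (h₁ : T (A.rhd B)) (h₂ : T (B.rhd C)) :
    T (A.rhd C) :=
  hT.mp (hT.il .J2) (hT.and_intro h₁ h₂)

theorem rhd_or (hT : ILTheory T) {A B C : ILForm} (h₁ : T (A.rhd C)) (h₂ : T (B.rhd C)) :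
    T ((A.or B).rhd C) :=
  hT.mp (hT.il .J3) (hT.and_intro h₁ h₂)

end ILTheory

namespace ILExtension

variable {P : ILForm → Prop}

theorem box_mono (hP : ILExtension P) {A B : ILForm} (h : P (A.imp B)) : P (A.box.imp B.box) :=
  hP.mp (hP.il .K) (hP.nec h)

theorem and_and_box_mono (hP : ILExtension P) (E : ILForm) {A A' : ILForm}
    (h : P (A'.imp A)) : P ((E.and (A'.and A'.box)).imp (E.and (A.and A.box))) :=
  hP.toILTheory.mp₂_of_taut (fun v hv => by grind [hv.imp, hv.and]) h (hP.box_mono h)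

theorem rhd_of_imp (hP : ILExtension P) {A B : ILForm} (h : P (A.imp B)) : P (A.rhd B) :=
  hP.mp (hP.il .J1) (hP.nec h)

theorem rhd_of_imp_or_dia (hP : ILExtension P) {A B : ILForm} (h : P (A.imp (B.or B.dia))) :
    P (A.rhd B) :=
  hP.toILTheory.rhd_trans (hP.rhd_of_imp h) <| hP.toILTheory.rhd_or
    (hP.rhd_of_imp (hP.toILTheory.of_taut fun v hv => by grind [hv.imp])) (hP.il .J5)

/-- By Löb's axiom `□¬(B ∧ □¬B)` already gives `□¬B`, so `B → (B ∧ □¬B) ∨ ◇(B ∧ □¬B)`. -/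
theorem rhd_and_box_neg (hP : ILExtension P) (B : ILForm) : P (B.rhd (B.and B.neg.box)) := by
  have hT := hP.toILTheory
  have löb : P ((B.and B.neg.box).neg.box.imp B.neg.box) :=
    hT.imp_trans (hP.box_mono (hT.of_taut fun v hv => by grind [hv.imp, hv.neg, hv.and]))
      (hP.il .L)
  exact hP.rhd_of_imp_or_dia
    (hT.mp_of_taut (fun v hv => by grind [hv.imp, hv.neg, hv.and, hv.or, hv.dia]) löb)

theorem rhd_of_and_box_neg_imp (hP : ILExtension P) {A B : ILForm}
    (h : P ((B.and B.neg.box).imp (A.or A.dia))) : P (B.rhd A) :=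
  hP.toILTheory.rhd_trans (hP.rhd_and_box_neg B) (hP.rhd_of_imp_or_dia h)

end ILExtension

namespace Deriv

variable {P : ILForm → Prop}

theorem mono {S S' : Set ILForm} (hSS' : S ⊆ S') {A : ILForm} (h : Deriv P S A) :
    Deriv P S' A := by
  induction h with
  | thm h => exact .thm h
  | mem h => exact .mem (hSS' h)
  | mp _ _ ih₁ ih₂ => exact .mp ih₁ ih₂

theorem of_insert {S : Set ILForm} {A X : ILForm} (h : Deriv P (insert A S) X)
    (hA : Deriv P S A) : Deriv P S X := by
  induction h with
  | thm h => exact .thm h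
  | mem h =>
    rcases Set.mem_insert_iff.mp h with rfl | h
    · exact hA
    · exact .mem h
  | mp _ _ ih₁ ih₂ => exact .mp ih₁ ih₂

theorem exists_finite {S : Set ILForm} {A : ILForm} (h : Deriv P S A) :
    ∃ s ⊆ S, s.Finite ∧ Deriv P s A := by
  induction h with
  | thm h => exact ⟨∅, Set.empty_subset _, Set.finite_empty, .thm h⟩
  | @mem A h => exact ⟨{A}, Set.singleton_subset_iff.mpr h, Set.finite_singleton A, .mem rfl⟩
  | mp _ _ ih₁ ih₂ =>
    obtain ⟨s₁, hs₁S, hs₁, h₁⟩ := ih₁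
    obtain ⟨s₂, hs₂S, hs₂, h₂⟩ := ih₂
    exact ⟨s₁ ∪ s₂, Set.union_subset hs₁S hs₂S, hs₁.union hs₂,
      .mp (h₁.mono Set.subset_union_left) (h₂.mono Set.subset_union_right)⟩

end Deriv

theorem ILConsistent.isOfFiniteCharacter (P : ILForm → Prop) :
    Order.IsOfFiniteCharacter {S | ILConsistent P S} := fun S =>
  ⟨fun hS _ hsS _ hs => hS (hs.mono hsS),
    fun h hS => by
      obtain ⟨s, hsS, hsfin, hs⟩ := hS.exists_finite
      exact h s hsS hsfin hs⟩

theorem ILConsistent.exists_ILMCS_superset {P : ILForm → Prop} {S : Set ILForm}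
    (hS : ILConsistent P S) : ∃ M, S ⊆ M ∧ ILMCS P M := by
  obtain ⟨M, hSM, hM⟩ := (ILConsistent.isOfFiniteCharacter P).exists_maximal hS
  exact ⟨M, hSM, hM.prop, fun T hMT hT => hMT.not_subset (hM.le_of_ge hT hMT.subset)⟩

namespace ILMCS

variable {P : ILForm → Prop} {Γ : Set ILForm}

theorem mem_of_deriv (hΓ : ILMCS P Γ) {A : ILForm} (h : Deriv P Γ A) : A ∈ Γ := by
  by_contra hA
  exact hΓ.2 _ (Set.ssubset_insert hA) fun hbot => hΓ.1 (hbot.of_insert h)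

theorem mem_of_prov (hΓ : ILMCS P Γ) {A : ILForm} (h : P A) : A ∈ Γ := hΓ.mem_of_deriv (.thm h)

theorem toILTheory (hP : ILExtension P) (hΓ : ILMCS P Γ) : ILTheory (· ∈ Γ) :=
  ⟨fun h => hΓ.mem_of_prov (hP.il h), fun h₁ h₂ => hΓ.mem_of_deriv (.mp (.mem h₁) (.mem h₂))⟩

theorem not_mem_of_neg_mem (hΓ : ILMCS P Γ) {A : ILForm} (h : A.neg ∈ Γ) : A ∉ Γ :=
  fun hA => hΓ.1 (.mp (.mem h) (.mem hA))

end ILMCS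

def IsAssured (Γ S : Set ILForm) (A : ILForm) : Prop :=
  ∃ L : List ILForm, (∀ C ∈ L, C ∈ S) ∧ A.neg.rhd (bigOr (L.map ILForm.neg)) ∈ Γ

namespace IsAssured

variable {P : ILForm → Prop} {Γ : Set ILForm}

theorem top (hP : ILExtension P) (hΓ : ILMCS P Γ) (S : Set ILForm) :
    IsAssured Γ S ILForm.bot.neg :=
  ⟨[], fun _ h => absurd h List.not_mem_nil,
    hΓ.mem_of_prov (hP.rhd_of_imp (hP.toILTheory.of_taut fun v hv => by
      grind [hv.imp, hv.neg, hv.bot, hv.bigOr]))⟩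

theorem and (hP : ILExtension P) (hΓ : ILMCS P Γ) {S : Set ILForm} {A A' : ILForm}
    (hA : IsAssured Γ S A) (hA' : IsAssured Γ S A') : IsAssured Γ S (A.and A') := by
  obtain ⟨L, hLS, hL⟩ := hA
  obtain ⟨L', hL'S, hL'⟩ := hA'
  have hT := hΓ.toILTheory hP
  have into_append {m : List ILForm} (hm : ∀ C ∈ m, C ∈ L ++ L') :
      (bigOr (m.map ILForm.neg)).rhd (bigOr ((L ++ L').map ILForm.neg)) ∈ Γ := by
    refine hΓ.mem_of_prov (hP.rhd_of_imp (hP.toILTheory.of_taut fun v hv => ?_))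
    simp only [hv.imp, hv.bigOr, List.any_map, Bool.or_eq_true, Bool.not_eq_true',
      List.any_eq_true]
    grind
  refine ⟨L ++ L', fun C hC => (List.mem_append.mp hC).elim (hLS C) (hL'S C), ?_⟩
  have de_morgan : (A.and A').neg.rhd (A.neg.or A'.neg) ∈ Γ :=
    hΓ.mem_of_prov (hP.rhd_of_imp
      (hP.toILTheory.of_taut fun v hv => by grind [hv.imp, hv.neg, hv.and, hv.or]))
  exact hT.rhd_trans de_morgan (hT.rhd_or
    (hT.rhd_trans hL (into_append fun C hC => List.mem_append_left L' hC))
    (hT.rhd_trans hL' (into_append fun C hC => List.mem_append_right L hC)))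

end IsAssured

def successorBase (Γ S : Set ILForm) (B : ILForm) : Set ILForm :=
  {B, B.neg.box} ∪ {X | ∃ A, IsAssured Γ S A ∧ (X = A ∨ X = A.box)}

section successorBase

variable {P : ILForm → Prop} {Γ S : Set ILForm} {B : ILForm}

theorem exists_isAssured_of_deriv_successorBase (hP : ILExtension P) (hΓ : ILMCS P Γ)
    {X : ILForm} (h : Deriv P (successorBase Γ S B) X) :
    ∃ A, IsAssured Γ S A ∧ P (((B.and B.neg.box).and (A.and A.box)).imp X) := by
  have hT := hP.toILTheory
  induction h with
  | thm hX => exact ⟨_, .top hP hΓ S, hT.mp_of_taut (fun v hv => by grind [hv.imp]) hX⟩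
  | mem hX =>
    rcases hX with (rfl | rfl) | ⟨_, hA, rfl | rfl⟩
    · exact ⟨_, .top hP hΓ S, hT.of_taut fun v hv => by grind [hv.imp, hv.and]⟩
    · exact ⟨_, .top hP hΓ S, hT.of_taut fun v hv => by grind [hv.imp, hv.and]⟩
    · exact ⟨_, hA, hT.of_taut fun v hv => by grind [hv.imp, hv.and]⟩
    · exact ⟨_, hA, hT.of_taut fun v hv => by grind [hv.imp, hv.and]⟩
  | mp _ _ ih₁ ih₂ =>
    obtain ⟨A₁, hA₁, h₁⟩ := ih₁
    obtain ⟨A₂, hA₂, h₂⟩ := ih₂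
    have weaken₁ := hP.and_and_box_mono (B.and B.neg.box)
      (hT.of_taut (A := (A₁.and A₂).imp A₁) fun v hv => by grind [hv.imp, hv.and])
    have weaken₂ := hP.and_and_box_mono (B.and B.neg.box)
      (hT.of_taut (A := (A₁.and A₂).imp A₂) fun v hv => by grind [hv.imp, hv.and])
    exact ⟨A₁.and A₂, hA₁.and hP hΓ hA₂, hT.mp₂_of_taut (fun v hv => by grind [hv.imp])
      (hT.imp_trans weaken₁ h₁) (hT.imp_trans weaken₂ h₂)⟩

theorem successorBase_consistent (hP : ILExtension P) (hΓ : ILMCS P Γ)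
    (h : ∀ L : List ILForm, (∀ C ∈ L, C ∈ S) →
      (B.rhd (bigOr (L.map ILForm.neg))).neg ∈ Γ) :
    ILConsistent P (successorBase Γ S B) := by
  intro hbot
  obtain ⟨A, ⟨L, hLS, hL⟩, hA⟩ := exists_isAssured_of_deriv_successorBase hP hΓ hbot
  have hT := hP.toILTheory
  have box_dneg : P (A.neg.neg.box.imp A.box) :=
    hP.box_mono (hT.of_taut fun v hv => by grind [hv.imp, hv.neg, hv.bot])
  have key : P ((B.and B.neg.box).imp (A.neg.or A.neg.dia)) :=
    hT.mp₂_of_taut (fun v hv => by grind [hv.imp, hv.and, hv.neg, hv.or, hv.dia, hv.bot])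
      box_dneg hA
  have hBL : B.rhd (bigOr (L.map ILForm.neg)) ∈ Γ :=
    (hΓ.toILTheory hP).rhd_trans (hΓ.mem_of_prov (hP.rhd_of_and_box_neg_imp key)) hL
  exact hΓ.not_mem_of_neg_mem (h L hLS) hBL

end successorBase

/-- Existence of S-assuring successors. -/
theorem assuring_successor_exists (P : ILForm → Prop) (hP : ILExtension P)
    (Γ : Set ILForm) (hΓ : ILMCS P Γ) (B : ILForm) (S : Set ILForm)
    (h : ∀ L : List ILForm, (∀ C ∈ L, C ∈ S) →
      (B.rhd (bigOr (L.map ILForm.neg))).neg ∈ Γ) :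
    ∃ Δ : Set ILForm, ILMCS P Δ ∧ Assuring Γ Δ S ∧ B ∈ Δ ∧ B.neg.box ∈ Δ := by
  obtain ⟨Δ, hbase, hΔ⟩ := (successorBase_consistent hP hΓ h).exists_ILMCS_superset
  refine ⟨Δ, hΔ, fun A L hLS hL => ⟨?_, ?_⟩, hbase (.inl (.inl rfl)), hbase (.inl (.inr rfl))⟩
  · exact hbase (.inr ⟨A, ⟨L, hLS, hL⟩, .inl rfl⟩)
  · exact hbase (.inr ⟨A, ⟨L, hLS, hL⟩, .inr rfl⟩)
end
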